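/- Let X and Y be sets equipped with transitive relations ≺_X and ≺_Y, and let f : X → Y be a surjective function such that for all x, x' ∈ X, x ≺_X x' if and only if f x ≺_Y f x'. Then for every ideal I of ≺_X the image f '' I is an ideal of ≺_Y, and the map I ↦ f '' I is a homeomorphism from the space of ideals I(≺_X) onto the space of ideals I(≺_Y). -/

import Mathlib

/-- An ideal of a (transitive) relation `r` on `S`: a nonempty, downward closed,
directed subset of `S`. -/
def IsIdeal {S : Type*} (r : S → S → Prop) (I : Set S) : Prop :=
  I.Nonempty ∧ (∀ a ∈ I, ∀ b, r b a → b ∈ I) ∧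
    ∀ a ∈ I, ∀ b ∈ I, ∃ c ∈ I, r a c ∧ r b c

/-- The space of ideals of a relation `r`. -/
def IdealSpace {S : Type*} (r : S → S → Prop) : Type _ :=
  {I : Set S // IsIdeal r I}

/-- The topology on the space of ideals, generated by the basic sets
`[a] = {I | a ∈ I}` for `a : S`. -/
instance {S : Type*} (r : S → S → Prop) : TopologicalSpace (IdealSpace r) :=
  TopologicalSpace.generateFrom {U | ∃ a : S, U = {I : IdealSpace r | a ∈ I.1}}

/-- A predicate is recursively enumerable (computably enumerable) if the partial
function `fun a => Part.assert (p a) fun _ => Part.some ()` is partial recursive.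
(This is Mathlib's `REPred`, absent from this Mathlib version.) -/
def REPred_old {α : Type*} [Primcodable α] (p : α → Prop) : Prop :=
  Partrec fun a => Part.assert (p a) fun _ => Part.some ()

/-!
Since `f` reflects `≺` exactly, an ideal of `≺_X` is saturated along the fibres of `f`: if `f x = f x'`
with `x' ∈ I`, directedness gives `x' ≺ c ∈ I`, hence `f x ≺ f c` and so `x ≺ c`. Therefore
`I ↦ f '' I` and `J ↦ f ⁻¹' J` are mutually inverse maps between ideals, and both send basic open sets
to basic open sets: `[a]` corresponds to `[f a]`.
-/

open Function

namespace IsIdeal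

variable {X Y : Type*} {rX : X → X → Prop} {rY : Y → Y → Prop} {f : X → Y}

theorem image (hf : Surjective f) (hiff : ∀ x x', rX x x' ↔ rY (f x) (f x')) {I : Set X}
    (hI : IsIdeal rX I) : IsIdeal rY (f '' I) := by
  obtain ⟨⟨x, hx⟩, hlower, hdir⟩ := hI
  refine ⟨⟨f x, x, hx, rfl⟩, ?_, ?_⟩
  · rintro _ ⟨a, ha, rfl⟩ b hb
    obtain ⟨b, rfl⟩ := hf b
    exact ⟨b, hlower a ha b ((hiff _ _).2 hb), rfl⟩
  · rintro _ ⟨a, ha, rfl⟩ _ ⟨b, hb, rfl⟩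
    obtain ⟨c, hc, hac, hbc⟩ := hdir a ha b hb
    exact ⟨f c, ⟨c, hc, rfl⟩, (hiff _ _).1 hac, (hiff _ _).1 hbc⟩

theorem preimage (hf : Surjective f) (hiff : ∀ x x', rX x x' ↔ rY (f x) (f x')) {J : Set Y}
    (hJ : IsIdeal rY J) : IsIdeal rX (f ⁻¹' J) := by
  obtain ⟨⟨y, hy⟩, hlower, hdir⟩ := hJ
  obtain ⟨x, rfl⟩ := hf y
  refine ⟨⟨x, hy⟩, fun a ha b hb => hlower (f a) ha (f b) ((hiff _ _).1 hb), ?_⟩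
  intro a ha b hb
  obtain ⟨c, hc, hac, hbc⟩ := hdir (f a) ha (f b) hb
  obtain ⟨c, rfl⟩ := hf c
  exact ⟨c, hc, (hiff _ _).2 hac, (hiff _ _).2 hbc⟩

theorem preimage_image (hiff : ∀ x x', rX x x' ↔ rY (f x) (f x')) {I : Set X}
    (hI : IsIdeal rX I) : f ⁻¹' (f '' I) = I := by
  refine Set.Subset.antisymm ?_ (Set.subset_preimage_image f I)
  rintro x ⟨x', hx', hfx⟩
  obtain ⟨c, hc, hx'c, -⟩ := hI.2.2 x' hx' x' hx'
  have hxc : rY (f x) (f c) := hfx ▸ (hiff _ _).1 hx'c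
  exact hI.2.1 c hc x ((hiff _ _).2 hxc)

end IsIdeal

namespace IdealSpace

variable {S : Type*} {r : S → S → Prop}

theorem isOpen_setOf_mem (a : S) : IsOpen {I : IdealSpace r | a ∈ I.1} :=
  TopologicalSpace.isOpen_generateFrom_of_mem ⟨a, rfl⟩

theorem continuous_of_isOpen_setOf_mem {T : Type*} [TopologicalSpace T] {g : T → IdealSpace r}
    (h : ∀ a, IsOpen {t | a ∈ (g t).1}) : Continuous g :=
  continuous_generateFrom_iff.2 fun _ ⟨a, hU⟩ => hU ▸ h a

variable {X Y : Type*} {rX : X → X → Prop} {rY : Y → Y → Prop} {f : X → Y}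

def homeomorphOfSurjective (hf : Surjective f) (hiff : ∀ x x', rX x x' ↔ rY (f x) (f x')) :
    IdealSpace rX ≃ₜ IdealSpace rY where
  toFun I := ⟨f '' I.1, I.2.image hf hiff⟩
  invFun J := ⟨f ⁻¹' J.1, J.2.preimage hf hiff⟩
  left_inv I := Subtype.ext (I.2.preimage_image hiff)
  right_inv J := Subtype.ext (Set.image_preimage_eq J.1 hf)
  continuous_toFun := continuous_of_isOpen_setOf_mem fun b => by
    obtain ⟨a, rfl⟩ := hf b
    have hbasic : {I : IdealSpace rX | f a ∈ f '' I.1} = {I | a ∈ I.1} := by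
      ext I
      exact Set.ext_iff.1 (I.2.preimage_image hiff) a
    simpa only [hbasic] using isOpen_setOf_mem a
  continuous_invFun := continuous_of_isOpen_setOf_mem fun a => isOpen_setOf_mem (f a)

end IdealSpace

theorem stmt8_general {X Y : Type*} (rX : X → X → Prop) (rY : Y → Y → Prop)
    (f : X → Y) (hf : Function.Surjective f)
    (hiff : ∀ x x', rX x x' ↔ rY (f x) (f x')) :
    (∀ I : Set X, IsIdeal rX I → IsIdeal rY (f '' I)) ∧
    ∃ h : IdealSpace rX ≃ₜ IdealSpace rY,
      ∀ I : IdealSpace rX, (h I).1 = f '' I.1 :=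
  ⟨fun _ hI => hI.image hf hiff, IdealSpace.homeomorphOfSurjective hf hiff, fun _ => rfl⟩

theorem stmt8 {X Y : Type*} (rX : X → X → Prop) (rY : Y → Y → Prop)
    (hrX : Transitive rX) (hrY : Transitive rY)
    (f : X → Y) (hf : Function.Surjective f)
    (hiff : ∀ x x', rX x x' ↔ rY (f x) (f x')) :
    (∀ I : Set X, IsIdeal rX I → IsIdeal rY (f '' I)) ∧
    ∃ h : IdealSpace rX ≃ₜ IdealSpace rY,
      ∀ I : IdealSpace rX, (h I).1 = f '' I.1 :=
  stmt8_general rX rY f hf hiff
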